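/- Trace-norm contraction is upper bounded by the square root of χ²_α contraction: for any quantum channel T and α ∈ (0,1], sup over density matrices ρ,σ of ‖T(ρ)-T(σ)‖₁/‖ρ-σ‖₁ ≤ √(sup over ρ,σ of χ²_α(T(ρ),T(σ))/χ²_α(ρ,σ)). Key lemma: for traceless Hermitian N with P = |N|/‖N‖₁, tr[N P^{-α} N P^{α-1}] = ‖N‖₁². -/

import Mathlib

open Matrix
open scoped ComplexOrder

/-- The trace norm `‖A‖₁ = tr √(A†A)` of a complex matrix. -/
noncomputable def traceNorm {d : ℕ} (A : Matrix (Fin d) (Fin d) ℂ) : ℝ :=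
  (((Matrix.posSemidef_conjTranspose_mul_self A).1.eigenvectorUnitary : Matrix (Fin d) (Fin d) ℂ) *
    Matrix.diagonal (fun i => ((Real.sqrt
      ((Matrix.posSemidef_conjTranspose_mul_self A).1.eigenvalues i) : ℝ) : ℂ)) *
    star ((Matrix.posSemidef_conjTranspose_mul_self A).1.eigenvectorUnitary :
      Matrix (Fin d) (Fin d) ℂ)).trace.re

/-- Real matrix power of a Hermitian matrix via the spectral decomposition
(defined as `0` on the kernel for negative exponents, i.e. a pseudo-inverse,
and as the junk value `0` for non-Hermitian input). -/
noncomputable def mrpow {d : ℕ} (σ : Matrix (Fin d) (Fin d) ℂ) (α : ℝ) :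
    Matrix (Fin d) (Fin d) ℂ :=
  if hσ : σ.IsHermitian then
    (hσ.eigenvectorUnitary : Matrix (Fin d) (Fin d) ℂ) *
      Matrix.diagonal (fun i => ((hσ.eigenvalues i ^ α : ℝ) : ℂ)) *
      star (hσ.eigenvectorUnitary : Matrix (Fin d) (Fin d) ℂ)
  else 0

/-- The mean α-family of quantum χ²-divergences
`χ²_α(ρ,σ) = tr[(ρ-σ) σ^{-α} (ρ-σ) σ^{α-1}]` (with pseudo-inverse powers of `σ`). -/
noncomputable def chiAlpha {d : ℕ} (α : ℝ) (ρ σ : Matrix (Fin d) (Fin d) ℂ) : ℝ :=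
  (((ρ - σ) * mrpow σ (-α) * (ρ - σ) * mrpow σ (α - 1)).trace).re

/-- A completely positive trace-preserving map (quantum channel), presented by
a Kraus decomposition `T(X) = ∑ μ, K μ * X * (K μ)ᴴ` with `∑ μ, (K μ)ᴴ * K μ = 1`. -/
def IsCPTP {d : ℕ} (T : Matrix (Fin d) (Fin d) ℂ →ₗ[ℂ] Matrix (Fin d) (Fin d) ℂ) : Prop :=
  ∃ (m : ℕ) (K : Fin m → Matrix (Fin d) (Fin d) ℂ),
    (∀ X, T X = ∑ μ, K μ * X * (K μ)ᴴ) ∧ (∑ μ, (K μ)ᴴ * K μ = 1)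

/-- A density matrix: positive semidefinite with unit trace. -/
def IsDensity {d : ℕ} (ρ : Matrix (Fin d) (Fin d) ℂ) : Prop :=
  ρ.PosSemidef ∧ ρ.trace = 1

/-!
For a traceless Hermitian `N` and `P = |N| / ‖N‖₁`, the states `ρ = P + N / ‖N‖₁` and `σ = P`
satisfy `χ²_α(ρ, σ) = 1`, since everything commutes with `N` and `N² P⁻¹ = ‖N‖₁ |N|`.
Mixing a little of the maximally mixed state into `σ` makes it full rank at the price of a
factor `δ < 1`, so the contraction hypothesis applies, and letting `δ → 1` finishes the proof.
On the output side one needs `‖ρ - σ‖₁² ≤ χ²_α(ρ, σ)`: write `‖A‖₁ = tr (Q A)` with `Q` a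
Hermitian unitary, expand in the eigenbasis `s` of `σ`, apply Cauchy–Schwarz with the weights
`s_i^{1-α} s_j^α` and their inverses, and bound the first factor by `1` through the weighted
AM–GM inequality `s_i^{1-α} s_j^α ≤ (1-α) s_i + α s_j`.
-/

section FunctionalCalculus

variable {n 𝕜 : Type*} [Fintype n] [DecidableEq n] [RCLike 𝕜]

theorem Matrix.cfc_mul_cfc (f g : ℝ → ℝ) (A : Matrix n n 𝕜) :
    cfc f A * cfc g A = cfc (fun x => f x * g x) A :=
  (cfc_mul f g A ((Set.toFinite _).continuousOn _) ((Set.toFinite _).continuousOn _)).symm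

theorem Matrix.cfc_cfc (f g : ℝ → ℝ) {A : Matrix n n 𝕜} (hA : A.IsHermitian) :
    cfc f (cfc g A) = cfc (f ∘ g) A :=
  (cfc_comp f g A hA.isSelfAdjoint ((Set.toFinite _).continuousOn _)
    ((Set.toFinite _).continuousOn _)).symm

namespace Matrix.IsHermitian

variable {A : Matrix n n 𝕜} (hA : A.IsHermitian)
include hA

theorem cfc_eq_conj (f : ℝ → ℝ) :
    cfc f A = (hA.eigenvectorUnitary : Matrix n n 𝕜) *
      diagonal (fun i => (f (hA.eigenvalues i) : 𝕜)) *
      star (hA.eigenvectorUnitary : Matrix n n 𝕜) := by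
  rw [hA.cfc_eq, IsHermitian.cfc, Unitary.conjStarAlgAut_apply]; rfl

theorem trace_cfc (f : ℝ → ℝ) : (cfc f A).trace = ∑ i, (f (hA.eigenvalues i) : 𝕜) := by
  rw [hA.cfc_eq_conj, trace_mul_cycle, Unitary.coe_star_mul_self, one_mul, trace_diagonal]

theorem posSemidef_cfc {f : ℝ → ℝ} (hf : ∀ i, 0 ≤ f (hA.eigenvalues i)) : (cfc f A).PosSemidef := by
  rw [hA.cfc_eq_conj, Unitary.isUnit_coe.posSemidef_star_right_conjugate_iff,
    posSemidef_diagonal_iff]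
  exact fun i => RCLike.ofReal_nonneg.mpr (hf i)

theorem posDef_cfc {f : ℝ → ℝ} (hf : ∀ i, 0 < f (hA.eigenvalues i)) : (cfc f A).PosDef := by
  rw [hA.cfc_eq_conj, Unitary.isUnit_coe.posDef_star_right_conjugate_iff, posDef_diagonal_iff]
  exact fun i => RCLike.ofReal_pos.mpr (hf i)

end Matrix.IsHermitian

end FunctionalCalculus

section TraceNorm

variable {d : ℕ}

theorem traceNorm_eq_cfc (A : Matrix (Fin d) (Fin d) ℂ) :
    traceNorm A = (cfc Real.sqrt (Aᴴ * A)).trace.re := by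
  rw [(isHermitian_conjTranspose_mul_self A).cfc_eq]; rfl

theorem traceNorm_nonneg (A : Matrix (Fin d) (Fin d) ℂ) : 0 ≤ traceNorm A := by
  rw [traceNorm_eq_cfc, (isHermitian_conjTranspose_mul_self A).trace_cfc, Complex.re_sum]
  exact Finset.sum_nonneg fun i _ => by simp [Real.sqrt_nonneg]

theorem Matrix.IsHermitian.traceNorm_cfc {A : Matrix (Fin d) (Fin d) ℂ} (hA : A.IsHermitian)
    (f : ℝ → ℝ) : traceNorm (cfc f A) = ∑ i, |f (hA.eigenvalues i)| := by
  have hsq : (cfc f A)ᴴ * cfc f A = cfc (fun x => f x ^ 2) A := by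
    rw [← star_eq_conjTranspose, (cfc_predicate f A).star_eq, cfc_mul_cfc]; simp only [sq]
  rw [traceNorm_eq_cfc, hsq, cfc_cfc _ _ hA, hA.trace_cfc, Complex.re_sum]
  simp [Real.sqrt_sq_eq_abs]

theorem Matrix.IsHermitian.traceNorm_eq {A : Matrix (Fin d) (Fin d) ℂ} (hA : A.IsHermitian) :
    traceNorm A = ∑ i, |hA.eigenvalues i| := by
  simpa only [cfc_id ℝ A hA.isSelfAdjoint, id] using hA.traceNorm_cfc id

theorem Matrix.IsHermitian.traceNorm_smul {A : Matrix (Fin d) (Fin d) ℂ} (hA : A.IsHermitian)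
    {c : ℝ} (hc : 0 ≤ c) : traceNorm (c • A) = c * traceNorm A := by
  rw [← cfc_const_mul_id c A hA.isSelfAdjoint, hA.traceNorm_cfc, hA.traceNorm_eq, Finset.mul_sum]
  simp [abs_mul, abs_of_nonneg hc]

theorem traceNorm_zero : traceNorm (0 : Matrix (Fin d) (Fin d) ℂ) = 0 := by
  simpa using isHermitian_zero.traceNorm_smul (c := 0) le_rfl

theorem Matrix.IsHermitian.traceNorm_pos {A : Matrix (Fin d) (Fin d) ℂ} (hA : A.IsHermitian)
    (hA0 : A ≠ 0) : 0 < traceNorm A := by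
  obtain ⟨i, hi⟩ := Function.ne_iff.mp (hA.eigenvalues_eq_zero_iff.not.mpr hA0)
  rw [hA.traceNorm_eq]
  exact Finset.sum_pos' (fun j _ => abs_nonneg _) ⟨i, Finset.mem_univ _, abs_pos.mpr hi⟩

end TraceNorm

section ChiSquared

variable {d : ℕ}

theorem Matrix.IsHermitian.mrpow_eq_cfc {σ : Matrix (Fin d) (Fin d) ℂ} (hσ : σ.IsHermitian)
    (β : ℝ) : mrpow σ β = cfc (fun x : ℝ => x ^ β) σ := by
  rw [mrpow, dif_pos hσ, hσ.cfc_eq]; rfl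

theorem Matrix.IsHermitian.chiAlpha_cfc {N : Matrix (Fin d) (Fin d) ℂ} (hN : N.IsHermitian)
    (α : ℝ) (f g : ℝ → ℝ) (hg : ∀ i, 0 < g (hN.eigenvalues i)) :
    chiAlpha α (cfc f N) (cfc g N) =
      ∑ i, (f (hN.eigenvalues i) - g (hN.eigenvalues i)) ^ 2 / g (hN.eigenvalues i) := by
  have hσ : (cfc g N).IsHermitian := cfc_predicate g N
  rw [chiAlpha, hσ.mrpow_eq_cfc, hσ.mrpow_eq_cfc, cfc_cfc _ _ hN, cfc_cfc _ _ hN,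
    ← cfc_sub f g N ((Set.toFinite _).continuousOn _) ((Set.toFinite _).continuousOn _),
    cfc_mul_cfc, cfc_mul_cfc, cfc_mul_cfc, hN.trace_cfc, Complex.re_sum]
  refine Finset.sum_congr rfl fun i _ => ?_
  simp only [Function.comp_apply, RCLike.ofReal_eq_complex_ofReal]
  rw [mul_right_comm _ _ (f _ - g _), mul_assoc, ← Real.rpow_add (hg i), Complex.ofReal_re,
    show -α + (α - 1) = -1 by ring, Real.rpow_neg_one, ← sq, div_eq_mul_inv]

end ChiSquared

section Unitary

variable {n 𝕜 : Type*} [Fintype n] [DecidableEq n] [RCLike 𝕜]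

theorem Matrix.sum_norm_sq_row_of_mem_unitaryGroup {U : Matrix n n 𝕜}
    (hU : U ∈ unitaryGroup n 𝕜) (i : n) : ∑ j, ‖U i j‖ ^ 2 = 1 := by
  have h : (U * star U) i i = (1 : Matrix n n 𝕜) i i := by rw [Unitary.mul_star_self_of_mem hU]
  simp only [mul_apply, star_apply, ← starRingEnd_apply, RCLike.mul_conj, one_apply_eq] at h
  exact_mod_cast h

theorem Matrix.sum_norm_sq_col_of_mem_unitaryGroup {U : Matrix n n 𝕜}
    (hU : U ∈ unitaryGroup n 𝕜) (j : n) : ∑ i, ‖U i j‖ ^ 2 = 1 := by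
  simpa using sum_norm_sq_row_of_mem_unitaryGroup (Unitary.star_mem hU) j

end Unitary

theorem Matrix.IsHermitian.exists_mem_unitaryGroup_traceNorm_eq {d : ℕ}
    {A : Matrix (Fin d) (Fin d) ℂ} (hA : A.IsHermitian) :
    ∃ Q ∈ unitaryGroup (Fin d) ℂ, traceNorm A = (Q * A).trace.re := by
  let sgn : ℝ → ℝ := fun x => if 0 ≤ x then 1 else -1
  refine ⟨cfc sgn A, ?_, ?_⟩
  · have hsq : (fun x => sgn x * sgn x) = fun _ => 1 :=
      funext fun x => by by_cases hx : 0 ≤ x <;> simp [sgn, hx]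
    rw [mem_unitaryGroup_iff, (cfc_predicate sgn A).star_eq, cfc_mul_cfc, hsq, cfc_const_one ℝ A]
  · have hmul : (fun x => sgn x * id x) = fun x => |x| :=
      funext fun x => by
        by_cases hx : 0 ≤ x <;> simp [sgn, hx, abs_of_nonneg, abs_of_neg, not_le.mp]
    have hQA := cfc_mul_cfc sgn id A
    rw [cfc_id ℝ A hA.isSelfAdjoint, hmul] at hQA
    rw [hQA, hA.trace_cfc, hA.traceNorm_eq, Complex.re_sum]
    simp

section WeightedCauchySchwarz

variable {ι : Type*} [Fintype ι] {α : ℝ} {s : ι → ℝ}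

theorem sum_sq_norm_mul_rpow_le_one (hα : α ∈ Set.Icc (0 : ℝ) 1) (hs : ∀ i, 0 ≤ s i)
    (hs1 : ∑ i, s i = 1) {q : ι → ι → ℂ} (hrow : ∀ i, ∑ j, ‖q i j‖ ^ 2 ≤ 1)
    (hcol : ∀ j, ∑ i, ‖q i j‖ ^ 2 ≤ 1) :
    ∑ i, ∑ j, ‖q i j‖ ^ 2 * (s i ^ (1 - α) * s j ^ α) ≤ 1 := by
  obtain ⟨hα0, hα1⟩ := hα
  calc ∑ i, ∑ j, ‖q i j‖ ^ 2 * (s i ^ (1 - α) * s j ^ α)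
      ≤ ∑ i, ∑ j, ‖q i j‖ ^ 2 * ((1 - α) * s i + α * s j) := by
        gcongr with i _ j _
        exact Real.geom_mean_le_arith_mean2_weighted (by linarith) hα0 (hs i) (hs j) (by ring)
    _ = (1 - α) * ∑ i, s i * ∑ j, ‖q i j‖ ^ 2 + α * ∑ j, s j * ∑ i, ‖q i j‖ ^ 2 := by
        simp only [mul_add, Finset.sum_add_distrib, Finset.mul_sum]
        rw [Finset.sum_comm (f := fun i j => ‖q i j‖ ^ 2 * (α * s j))]
        congr 1 <;> exact Finset.sum_congr rfl fun _ _ => Finset.sum_congr rfl fun _ _ => by ring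
    _ ≤ (1 - α) * ∑ i, s i * 1 + α * ∑ j, s j * 1 := by
        gcongr with i _ j _
        all_goals first | exact hs _ | exact hrow _ | exact hcol _
    _ = 1 := by simp only [mul_one, hs1]; ring

theorem sq_norm_sum_mul_le_sum_sq_norm_mul_rpow (hα : α ∈ Set.Icc (0 : ℝ) 1) (hs : ∀ i, 0 ≤ s i)
    (hs1 : ∑ i, s i = 1) {q b : ι → ι → ℂ} (hrow : ∀ i, ∑ j, ‖q i j‖ ^ 2 ≤ 1)
    (hcol : ∀ j, ∑ i, ‖q i j‖ ^ 2 ≤ 1) (hb : ∀ i j, b j i ≠ 0 → 0 < s i ∧ 0 < s j) :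
    ‖∑ i, ∑ j, q i j * b j i‖ ^ 2 ≤ ∑ i, ∑ j, ‖b j i‖ ^ 2 * (s i ^ (α - 1) * s j ^ (-α)) := by
  have hw : ∀ i j (x y : ℝ), 0 ≤ s i ^ x * s j ^ y := fun i j x y =>
    mul_nonneg (Real.rpow_nonneg (hs i) x) (Real.rpow_nonneg (hs j) y)
  have hCS : (∑ p : ι × ι, ‖q p.1 p.2‖ * ‖b p.2 p.1‖) ^ 2 ≤
      (∑ p : ι × ι, ‖q p.1 p.2‖ ^ 2 * (s p.1 ^ (1 - α) * s p.2 ^ α)) *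
        ∑ p : ι × ι, ‖b p.2 p.1‖ ^ 2 * (s p.1 ^ (α - 1) * s p.2 ^ (-α)) := by
    refine Finset.sum_sq_le_sum_mul_sum_of_sq_le_mul _
      (fun p _ => mul_nonneg (sq_nonneg _) (hw _ _ _ _))
      (fun p _ => mul_nonneg (sq_nonneg _) (hw _ _ _ _)) fun ⟨i, j⟩ _ => ?_
    by_cases hbij : b j i = 0
    · simp [hbij]
    obtain ⟨hi, hj⟩ := hb i j hbij
    have hrecip : (s i ^ (1 - α) * s j ^ α) * (s i ^ (α - 1) * s j ^ (-α)) = 1 := by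
      rw [mul_mul_mul_comm, ← Real.rpow_add hi, ← Real.rpow_add hj]
      norm_num
    exact le_of_eq (by linear_combination (-(‖q i j‖ ^ 2 * ‖b j i‖ ^ 2)) * hrecip)
  simp only [Fintype.sum_prod_type] at hCS
  have hnorm : ‖∑ i, ∑ j, q i j * b j i‖ ≤ ∑ i, ∑ j, ‖q i j‖ * ‖b j i‖ := by
    refine (norm_sum_le _ _).trans (Finset.sum_le_sum fun i _ => (norm_sum_le _ _).trans ?_)
    simp only [norm_mul, le_refl]
  calc ‖∑ i, ∑ j, q i j * b j i‖ ^ 2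
      ≤ (∑ i, ∑ j, ‖q i j‖ * ‖b j i‖) ^ 2 := by gcongr
    _ ≤ _ := hCS
    _ ≤ 1 * ∑ i, ∑ j, ‖b j i‖ ^ 2 * (s i ^ (α - 1) * s j ^ (-α)) := by
        gcongr
        · exact Finset.sum_nonneg fun i _ => Finset.sum_nonneg fun j _ =>
            mul_nonneg (sq_nonneg _) (hw i j _ _)
        · exact sum_sq_norm_mul_rpow_le_one hα hs hs1 hrow hcol
    _ = _ := one_mul _

end WeightedCauchySchwarz

theorem Matrix.trace_mul_diagonal_mul_mul_diagonal {n R : Type*} [Fintype n] [DecidableEq n]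
    [CommSemiring R] (B : Matrix n n R) (a b : n → R) :
    (B * diagonal a * B * diagonal b).trace = ∑ i, ∑ j, B i j * a j * B j i * b i := by
  simp only [trace, diag]
  refine Finset.sum_congr rfl fun i _ => ?_
  rw [mul_diagonal, mul_apply, Finset.sum_mul]
  simp only [mul_diagonal]

section Eigenbasis

variable {n 𝕜 : Type*} [Fintype n] [DecidableEq n] [RCLike 𝕜]

noncomputable def Matrix.IsHermitian.toEigenbasis {σ : Matrix n n 𝕜} (hσ : σ.IsHermitian) :
    Matrix n n 𝕜 ≃⋆ₐ[𝕜] Matrix n n 𝕜 :=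
  Unitary.conjStarAlgAut 𝕜 _ (star hσ.eigenvectorUnitary)

namespace Matrix.IsHermitian

variable {σ : Matrix n n 𝕜} (hσ : σ.IsHermitian)

theorem toEigenbasis_apply (X : Matrix n n 𝕜) :
    hσ.toEigenbasis X =
      star (hσ.eigenvectorUnitary : Matrix n n 𝕜) * X * hσ.eigenvectorUnitary := by
  rw [toEigenbasis, Unitary.conjStarAlgAut_apply, Unitary.coe_star, star_star]

theorem trace_toEigenbasis (X : Matrix n n 𝕜) : (hσ.toEigenbasis X).trace = X.trace := by
  rw [toEigenbasis_apply, trace_mul_cycle, ← Unitary.coe_star, Unitary.coe_mul_star_self, one_mul]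

theorem toEigenbasis_mem_unitaryGroup {Q : Matrix n n 𝕜} (hQ : Q ∈ unitaryGroup n 𝕜) :
    hσ.toEigenbasis Q ∈ unitaryGroup n 𝕜 := by
  rw [toEigenbasis_apply]
  exact mul_mem (mul_mem (star hσ.eigenvectorUnitary).2 hQ) hσ.eigenvectorUnitary.2

theorem isHermitian_toEigenbasis {A : Matrix n n 𝕜} (hA : A.IsHermitian) :
    (hσ.toEigenbasis A).IsHermitian := by
  rw [IsHermitian, ← star_eq_conjTranspose, ← map_star, hA.star_eq]

theorem toEigenbasis_apply_eq_zero {A : Matrix n n 𝕜} (hker : ∀ x, σ *ᵥ x = 0 → A *ᵥ x = 0)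
    {i : n} (hi : hσ.eigenvalues i = 0) (j : n) : hσ.toEigenbasis A j i = 0 := by
  have hv : σ *ᵥ ⇑(hσ.eigenvectorBasis i) = 0 := by
    rw [hσ.mulVec_eigenvectorBasis, hi, zero_smul]
  have hcol : hσ.toEigenbasis A *ᵥ Pi.single i 1 = 0 := by
    rw [toEigenbasis_apply, ← mulVec_mulVec, ← mulVec_mulVec, hσ.eigenvectorUnitary_mulVec,
      hker _ hv, mulVec_zero]
  simpa [mulVec_single_one] using congr_fun hcol j

end Matrix.IsHermitian

end Eigenbasis

section ChiSquaredEigenbasis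

variable {d : ℕ} {σ : Matrix (Fin d) (Fin d) ℂ} (hσ : σ.IsHermitian)

theorem Matrix.IsHermitian.toEigenbasis_mrpow (β : ℝ) :
    hσ.toEigenbasis (mrpow σ β) = diagonal (fun i => ((hσ.eigenvalues i ^ β : ℝ) : ℂ)) := by
  rw [mrpow, dif_pos hσ, toEigenbasis_apply, ← mul_assoc, ← mul_assoc,
    Unitary.coe_star_mul_self, one_mul, mul_assoc, Unitary.coe_star_mul_self, mul_one]

theorem Matrix.IsHermitian.chiAlpha_eq_sum_toEigenbasis {ρ : Matrix (Fin d) (Fin d) ℂ}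
    (hA : (ρ - σ).IsHermitian) (α : ℝ) :
    chiAlpha α ρ σ = ∑ i, ∑ j, ‖hσ.toEigenbasis (ρ - σ) j i‖ ^ 2 *
      (hσ.eigenvalues i ^ (α - 1) * hσ.eigenvalues j ^ (-α)) := by
  rw [chiAlpha, ← hσ.trace_toEigenbasis, map_mul, map_mul, map_mul, hσ.toEigenbasis_mrpow,
    hσ.toEigenbasis_mrpow, trace_mul_diagonal_mul_mul_diagonal, Complex.re_sum]
  refine Finset.sum_congr rfl fun i _ => ?_
  rw [Complex.re_sum]
  refine Finset.sum_congr rfl fun j _ => ?_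
  rw [← (hσ.isHermitian_toEigenbasis hA).apply i j, Complex.star_def,
    mul_right_comm _ _ (hσ.toEigenbasis (ρ - σ) j i), Complex.conj_mul']
  norm_cast
  ring

end ChiSquaredEigenbasis

theorem sq_traceNorm_sub_le_chiAlpha {d : ℕ} {α : ℝ} (hα : α ∈ Set.Icc (0 : ℝ) 1)
    {ρ σ : Matrix (Fin d) (Fin d) ℂ} (hρ : ρ.IsHermitian) (hσ : IsDensity σ)
    (hker : ∀ x, σ *ᵥ x = 0 → ρ *ᵥ x = 0) :
    traceNorm (ρ - σ) ^ 2 ≤ chiAlpha α ρ σ := by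
  have hσH : σ.IsHermitian := hσ.1.isHermitian
  have hA : (ρ - σ).IsHermitian := hρ.sub hσH
  set s := hσH.eigenvalues
  set B := hσH.toEigenbasis (ρ - σ)
  have hBH : B.IsHermitian := hσH.isHermitian_toEigenbasis hA
  have hs1 : ∑ i, s i = 1 := by
    have h : ((∑ i, s i : ℝ) : ℂ) = 1 := by
      rw [← hσ.2, hσH.trace_eq_sum_eigenvalues, Complex.ofReal_sum]; rfl
    exact_mod_cast h
  have hB_zero : ∀ i, s i = 0 → ∀ j, B j i = 0 := fun i hi =>
    hσH.toEigenbasis_apply_eq_zero (fun x hx => by rw [sub_mulVec, hker x hx, hx, sub_zero]) hi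
  have hB_supp : ∀ i j, B j i ≠ 0 → 0 < s i ∧ 0 < s j := by
    intro i j hij
    refine ⟨(hσ.1.eigenvalues_nonneg i).lt_of_ne fun hi => hij (hB_zero i hi.symm j),
      (hσ.1.eigenvalues_nonneg j).lt_of_ne fun hj => hij ?_⟩
    rw [← hBH.apply j i, hB_zero j hj.symm i, star_zero]
  obtain ⟨Q, hQ, htn⟩ := hA.exists_mem_unitaryGroup_traceNorm_eq
  set Q' := hσH.toEigenbasis Q
  have hQ' : Q' ∈ unitaryGroup (Fin d) ℂ := hσH.toEigenbasis_mem_unitaryGroup hQ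
  have htn' : traceNorm (ρ - σ) = (∑ i, ∑ j, Q' i j * B j i).re := by
    rw [htn, ← hσH.trace_toEigenbasis, map_mul]
    simp only [trace, diag, mul_apply, Q', B]
  calc traceNorm (ρ - σ) ^ 2 ≤ ‖∑ i, ∑ j, Q' i j * B j i‖ ^ 2 := by
        rw [htn']
        exact pow_le_pow_left₀ (htn' ▸ traceNorm_nonneg _) (Complex.re_le_norm _) 2
    _ ≤ ∑ i, ∑ j, ‖B j i‖ ^ 2 * (s i ^ (α - 1) * s j ^ (-α)) :=
        sq_norm_sum_mul_le_sum_sq_norm_mul_rpow hα hσ.1.eigenvalues_nonneg hs1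
          (fun i => (sum_norm_sq_row_of_mem_unitaryGroup hQ' i).le)
          (fun j => (sum_norm_sq_col_of_mem_unitaryGroup hQ' j).le) hB_supp
    _ = chiAlpha α ρ σ := (hσH.chiAlpha_eq_sum_toEigenbasis hA α).symm

namespace IsCPTP

variable {d : ℕ} {T : Matrix (Fin d) (Fin d) ℂ →ₗ[ℂ] Matrix (Fin d) (Fin d) ℂ} (hT : IsCPTP T)
include hT

theorem posSemidef_apply {X : Matrix (Fin d) (Fin d) ℂ} (hX : X.PosSemidef) : (T X).PosSemidef := by
  obtain ⟨m, K, hK, -⟩ := hT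
  rw [hK]
  exact posSemidef_sum _ fun μ _ => hX.mul_mul_conjTranspose_same (K μ)

theorem trace_apply (X : Matrix (Fin d) (Fin d) ℂ) : (T X).trace = X.trace := by
  obtain ⟨m, K, hK, hK1⟩ := hT
  simp_rw [hK, trace_sum, trace_mul_cycle _ X]
  rw [← trace_sum, ← Finset.sum_mul, hK1, one_mul]

theorem isDensity_apply {ρ : Matrix (Fin d) (Fin d) ℂ} (hρ : IsDensity ρ) : IsDensity (T ρ) :=
  ⟨hT.posSemidef_apply hρ.1, (hT.trace_apply ρ).trans hρ.2⟩

end IsCPTP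

theorem Matrix.PosSemidef.mulVec_eq_zero_of_posSemidef_sub {n 𝕜 : Type*} [Fintype n] [RCLike 𝕜]
    {P R : Matrix n n 𝕜} (hP : P.PosSemidef) (hRP : (R - P).PosSemidef) {x : n → 𝕜}
    (hx : R *ᵥ x = 0) : P *ᵥ x = 0 := by
  rw [← hP.dotProduct_mulVec_zero_iff]
  have h := hRP.dotProduct_mulVec_nonneg x
  rw [sub_mulVec, hx, zero_sub, dotProduct_neg, neg_nonneg] at h
  exact le_antisymm h (hP.dotProduct_mulVec_nonneg x)

theorem exists_isDensity_pair_chiAlpha_le {d : ℕ} {N : Matrix (Fin d) (Fin d) ℂ}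
    (hN : N.IsHermitian) (hN0 : N ≠ 0) (htr : N.trace = 0) (α : ℝ) {δ : ℝ}
    (hδ : δ ∈ Set.Ioo (0 : ℝ) 1) :
    ∃ ρ σ : Matrix (Fin d) (Fin d) ℂ, IsDensity ρ ∧ IsDensity σ ∧ σ.PosDef ∧
      (σ + σ - ρ).PosSemidef ∧ ρ - σ = (δ / traceNorm N) • N ∧ chiAlpha α ρ σ ≤ δ := by
  obtain ⟨hδ0, hδ1⟩ := hδ
  have ht := hN.traceNorm_pos hN0
  have hd : (0 : ℝ) < d := Nat.cast_pos.mpr <| Nat.pos_of_ne_zero <| by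
    rintro rfl; exact hN0 (Subsingleton.elim _ _)
  set μ := hN.eigenvalues with hμdef
  set c := δ / traceNorm N
  have hc : 0 ≤ c := div_nonneg hδ0.le ht.le
  have hcμ : ∑ i, c * |μ i| = δ := by
    rw [← Finset.mul_sum, ← hN.traceNorm_eq, div_mul_cancel₀ _ ht.ne']
  have hμ : ∑ i, μ i = 0 := by
    have h : ((∑ i, μ i : ℝ) : ℂ) = 0 := by
      rw [← htr, hN.trace_eq_sum_eigenvalues, Complex.ofReal_sum]; rfl
    exact_mod_cast h
  -- `σ` mixes the optimal but singular `|N| / ‖N‖₁` with a little of the maximally mixed state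
  set g : ℝ → ℝ := fun x => c * |x| + (1 - δ) / d
  have hg : ∀ x, c * |x| < g x := fun x => lt_add_of_pos_right _ (div_pos (by linarith) hd)
  have hg0 : ∀ x, 0 < g x := fun x => (mul_nonneg hc (abs_nonneg x)).trans_lt (hg x)
  have hgsum : ∑ i, g (μ i) = 1 := by
    rw [Finset.sum_add_distrib, hcμ, Finset.sum_const, Finset.card_univ, Fintype.card_fin,
      nsmul_eq_mul]
    field_simp
    ring
  have hdiff : cfc (fun x => g x + c * x) N - cfc g N = c • N := by
    rw [← cfc_sub _ _ N ((Set.toFinite _).continuousOn _) ((Set.toFinite _).continuousOn _)]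
    simp only [add_sub_cancel_left]
    exact cfc_const_mul_id c N hN.isSelfAdjoint
  refine ⟨cfc (fun x => g x + c * x) N, cfc g N, ⟨hN.posSemidef_cfc fun i => ?_, ?_⟩,
    ⟨hN.posSemidef_cfc fun i => (hg0 _).le, ?_⟩, hN.posDef_cfc fun i => hg0 _, ?_, hdiff, ?_⟩
  · nlinarith [hg (μ i), neg_abs_le (μ i)]
  · rw [hN.trace_cfc, ← hμdef]
    simp only [RCLike.ofReal_eq_complex_ofReal]
    have h : ∑ i, (g (μ i) + c * μ i) = 1 := by
      rw [Finset.sum_add_distrib, ← Finset.mul_sum, hμ, hgsum, mul_zero, add_zero]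
    exact_mod_cast h
  · rw [hN.trace_cfc, ← hμdef]
    simp only [RCLike.ofReal_eq_complex_ofReal]
    exact_mod_cast hgsum
  · rw [show ∀ σ ρ : Matrix (Fin d) (Fin d) ℂ, σ + σ - ρ = σ - (ρ - σ) from fun _ _ => by abel,
      hdiff, ← cfc_const_mul_id c N hN.isSelfAdjoint,
      ← cfc_sub _ _ N ((Set.toFinite _).continuousOn _) ((Set.toFinite _).continuousOn _)]
    exact hN.posSemidef_cfc fun i => by nlinarith [hg (μ i), le_abs_self (μ i)]
  · rw [hN.chiAlpha_cfc α _ _ fun i => hg0 _, ← hcμ]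
    refine Finset.sum_le_sum fun i _ => div_le_of_le_mul₀ (hg0 _).le (by positivity) ?_
    rw [← hμdef, add_sub_cancel_left, mul_pow, ← sq_abs (μ i), ← mul_pow]
    exact (pow_two _).trans_le (mul_le_mul_of_nonneg_left (hg (μ i)).le (by positivity))

open Filter Topology in
theorem le_of_forall_mem_Ioo_mul_le {a b : ℝ} (h : ∀ δ ∈ Set.Ioo (0 : ℝ) 1, δ * a ≤ b) :
    a ≤ b := by
  refine le_of_tendsto (x := 𝓝[<] 1) (f := fun δ => δ * a) ?_ ?_
  · exact ((by fun_prop : Continuous fun δ : ℝ => δ * a).tendsto' 1 a (one_mul a)).mono_left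
      nhdsWithin_le_nhds
  · filter_upwards [Ioo_mem_nhdsLT one_pos] with δ hδ using h δ hδ

/-- Trace-norm contraction is upper bounded by the square root of the
χ²_α contraction: for a quantum channel `T` and `α ∈ (0,1]`, if `η` bounds the χ²_α
contraction ratio over all pairs of states (with `σ` full rank), i.e.
`χ²_α(T(ρ),T(σ)) ≤ η χ²_α(ρ,σ)`, then `‖T(ρ)-T(σ)‖₁ ≤ √η ‖ρ-σ‖₁` for all states,
i.e. `η_tr(T) ≤ √(η_χ^α(T))`. -/
theorem traceNorm_contraction_le_sqrt_chi_contraction (d : ℕ)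
    (T : Matrix (Fin d) (Fin d) ℂ →ₗ[ℂ] Matrix (Fin d) (Fin d) ℂ)
    (α η : ℝ) (hα : α ∈ Set.Ioc (0 : ℝ) 1) (hη : 0 ≤ η)
    (hT : IsCPTP T)
    (hchi : ∀ ρ σ : Matrix (Fin d) (Fin d) ℂ, IsDensity ρ → IsDensity σ → σ.PosDef →
      chiAlpha α (T ρ) (T σ) ≤ η * chiAlpha α ρ σ) :
    ∀ ρ σ : Matrix (Fin d) (Fin d) ℂ, IsDensity ρ → IsDensity σ →
      traceNorm (T ρ - T σ) ≤ Real.sqrt η * traceNorm (ρ - σ) := by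
  intro ρ σ hρ hσ
  have hN : (ρ - σ).IsHermitian := hρ.1.isHermitian.sub hσ.1.isHermitian
  rw [← map_sub]
  rcases eq_or_ne (ρ - σ) 0 with hN0 | hN0
  · simp [hN0, traceNorm_zero]
  have ht := hN.traceNorm_pos hN0
  have hTN : (T (ρ - σ)).IsHermitian := by
    rw [map_sub]
    exact (hT.posSemidef_apply hρ.1).isHermitian.sub (hT.posSemidef_apply hσ.1).isHermitian
  suffices h : traceNorm (T (ρ - σ)) ^ 2 ≤ η * traceNorm (ρ - σ) ^ 2 by
    rw [← Real.sqrt_sq (traceNorm_nonneg (T (ρ - σ))), ← Real.sqrt_sq ht.le, ← Real.sqrt_mul hη]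
    exact Real.sqrt_le_sqrt h
  refine le_of_forall_mem_Ioo_mul_le fun δ hδ => ?_
  obtain ⟨ρ', σ', hρ', hσ', hσ'pd, hle, hdiff, hchi'⟩ := exists_isDensity_pair_chiAlpha_le hN hN0
    (by rw [trace_sub, hρ.2, hσ.2, sub_self]) α hδ
  have hker : ∀ x, T σ' *ᵥ x = 0 → T ρ' *ᵥ x = 0 := fun x hx =>
    (hT.posSemidef_apply hρ'.1).mulVec_eq_zero_of_posSemidef_sub
      (by simpa only [map_sub, map_add] using hT.posSemidef_apply hle)
      (by rw [add_mulVec, hx, add_zero])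
  have key := sq_traceNorm_sub_le_chiAlpha ⟨hα.1.le, hα.2⟩
    (hT.posSemidef_apply hρ'.1).isHermitian (hT.isDensity_apply hσ') hker
  rw [← map_sub, hdiff, LinearMap.map_smul_of_tower, hTN.traceNorm_smul (div_nonneg hδ.1.le ht.le)]
    at key
  have := key.trans ((hchi ρ' σ' hρ' hσ' hσ'pd).trans (mul_le_mul_of_nonneg_left hchi' hη))
  rw [div_mul_eq_mul_div, div_pow, div_le_iff₀ (by positivity)] at this
  nlinarith [hδ.1]
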